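/- arXiv:2311.04320 — 3 statements merged into one kernel-verified Lean document; each statement's English description precedes it below -/
import Mathlib

section
/- (Group-affinity of the IMU process model on SE₂(3).) Fix ω̃, ã, g ∈ ℝ³. Define f : Matrix 5 5 ℝ → Matrix 5 5 ℝ as follows: for a 5×5 matrix X, writing R for its top-left 3×3 block, v ∈ ℝ³ for the top three entries of its 4th column, and p ∈ ℝ³ for the top three entries of its 5th column, let f(X) be the 5×5 matrix whose top-left 3×3 block is R(ω̃)ₓ, whose 4th column has top three entries R ã + g, whose 5th column has top three entries v, and whose remaining entries (in particular the bottom two rows) are zero. Then f is group affine on the set of block-affine matrices: for all 5×5 matrices X₁, X₂ whose bottom two rows equal [0_{2×3} I₂], one has f(X₁ X₂) = f(X₁) X₂ + X₁ f(X₂) − X₁ f(I₅) X₂, where I₅ is the 5×5 identity matrix. -/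
open Matrix

/-- The skew-symmetric matrix `(ω)ₓ` associated with `ω ∈ ℝ³`. -/
def skew3 (ω : Fin 3 → ℝ) : Matrix (Fin 3) (Fin 3) ℝ :=
  !![0, -ω 2, ω 1; ω 2, 0, -ω 0; -ω 1, ω 0, 0]

/-- The top-left `3 × 3` block `R` of a `5 × 5` matrix. -/
def blockR (X : Matrix (Fin 5) (Fin 5) ℝ) : Matrix (Fin 3) (Fin 3) ℝ :=
  X.submatrix (Fin.castLE (by norm_num)) (Fin.castLE (by norm_num))

/-- The top three entries `v` of the 4th column of a `5 × 5` matrix. -/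
def colv (X : Matrix (Fin 5) (Fin 5) ℝ) : Fin 3 → ℝ :=
  fun i => X (Fin.castLE (by norm_num) i) 3

/-- The IMU process model `f` on `5 × 5` matrices: for `X` with blocks
`R, v, p`, `f X` has top-left block `R (ω̃)ₓ`, 4th-column top entries
`R ã + g`, 5th-column top entries `v`, and zeros elsewhere. -/
def fIMU (ω a g : Fin 3 → ℝ) (X : Matrix (Fin 5) (Fin 5) ℝ) :
    Matrix (Fin 5) (Fin 5) ℝ :=
  Matrix.of fun i j =>
    if hi : (i : ℕ) < 3 then
      if hj : (j : ℕ) < 3 then (blockR X * skew3 ω) ⟨i, hi⟩ ⟨j, hj⟩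
      else if (j : ℕ) = 3 then (blockR X *ᵥ a + g) ⟨i, hi⟩
      else colv X ⟨i, hi⟩
    else 0

/-! On block-affine matrices `X` (bottom rows `[0 I₂]`) the process model is two-sided linear,
`f X = X U + V X` for constant matrices `U, V`. Any such map is group affine: expanding
`f(X₁) X₂ + X₁ f(X₂) - X₁ f(I) X₂`, the cross terms `X₁ U X₂ + X₁ V X₂` cancel against
`X₁ f(I) X₂ = X₁ (U + V) X₂`, leaving `X₁ X₂ U + V X₁ X₂ = f(X₁ X₂)`. -/

namespace Matrix

variable {n α : Type*} [Fintype n] [DecidableEq n] [NonAssocSemiring α]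

def identityRowsSubmonoid (s : Set n) : Submonoid (Matrix n n α) where
  carrier := {X | ∀ i ∈ s, ∀ j, X i j = (1 : Matrix n n α) i j}
  one_mem' _ _ _ := rfl
  mul_mem' {X Y} hX hY i hi j := by
    rw [← hY i hi j, mul_apply]
    simp [hX i hi, one_apply]

end Matrix

theorem group_affine_of_eq_mul_add_mul {A : Type*} [Ring A] {S : Submonoid A} {f : A → A}
    {U V : A} (hf : ∀ X ∈ S, f X = X * U + V * X) {X Y : A} (hX : X ∈ S) (hY : Y ∈ S) :
    f (X * Y) = f X * Y + X * f Y - X * f 1 * Y := by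
  rw [hf _ (S.mul_mem hX hY), hf X hX, hf Y hY, hf 1 S.one_mem]
  noncomm_ring

def blockAffine : Submonoid (Matrix (Fin 5) (Fin 5) ℝ) :=
  Matrix.identityRowsSubmonoid {i | 3 ≤ (i : ℕ)}

theorem mem_blockAffine_iff {X : Matrix (Fin 5) (Fin 5) ℝ} :
    X ∈ blockAffine ↔
      ∀ i : Fin 5, 3 ≤ (i : ℕ) → ∀ j : Fin 5, X i j = if (i : ℕ) = (j : ℕ) then 1 else 0 := by
  simp [blockAffine, Matrix.identityRowsSubmonoid, Matrix.one_apply, Fin.val_inj]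

-- The `1` at `(3, 4)` of `imuRight` copies `v` into the 5th column, but also leaves a `1`
-- at `(3, 4)` of `X * imuRight ω a`; the `-1` of `imuLeft` removes it.
def imuRight (ω a : Fin 3 → ℝ) : Matrix (Fin 5) (Fin 5) ℝ :=
  !![0, -ω 2, ω 1, a 0, 0; ω 2, 0, -ω 0, a 1, 0; -ω 1, ω 0, 0, a 2, 0; 0, 0, 0, 0, 1; 0, 0, 0, 0, 0]

def imuLeft (g : Fin 3 → ℝ) : Matrix (Fin 5) (Fin 5) ℝ :=
  !![0, 0, 0, g 0, 0; 0, 0, 0, g 1, 0; 0, 0, 0, g 2, 0; 0, 0, 0, 0, -1; 0, 0, 0, 0, 0]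

theorem fIMU_eq_mul_add_mul (ω a g : Fin 3 → ℝ) {X : Matrix (Fin 5) (Fin 5) ℝ}
    (hX : X ∈ blockAffine) :
    fIMU ω a g X = X * imuRight ω a + imuLeft g * X := by
  have h3 := hX 3 (by decide)
  have h4 := hX 4 (by decide)
  ext i j
  fin_cases i <;> fin_cases j <;>
    simp [fIMU, blockR, colv, skew3, imuRight, imuLeft, mul_apply, mulVec, vecMul, dotProduct,
      Fin.sum_univ_five, Fin.sum_univ_three, h3, h4, one_apply]

/-- **Group-affinity of the IMU process model on SE₂(3).**
For all `5 × 5` matrices `X₁, X₂` whose bottom two rows equal `[0 I₂]`,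
`f (X₁ X₂) = f X₁ · X₂ + X₁ · f X₂ − X₁ · f I₅ · X₂`. -/
theorem fIMU_group_affine (ω a g : Fin 3 → ℝ)
    (X₁ X₂ : Matrix (Fin 5) (Fin 5) ℝ)
    (hX₁ : ∀ i : Fin 5, 3 ≤ (i : ℕ) → ∀ j : Fin 5,
      X₁ i j = if (i : ℕ) = (j : ℕ) then 1 else 0)
    (hX₂ : ∀ i : Fin 5, 3 ≤ (i : ℕ) → ∀ j : Fin 5,
      X₂ i j = if (i : ℕ) = (j : ℕ) then 1 else 0) :
    fIMU ω a g (X₁ * X₂) =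
      fIMU ω a g X₁ * X₂ + X₁ * fIMU ω a g X₂ - X₁ * fIMU ω a g 1 * X₂ := by
  exact group_affine_of_eq_mul_add_mul (fun X hX => fIMU_eq_mul_add_mul ω a g hX)
    (mem_blockAffine_iff.2 hX₁) (mem_blockAffine_iff.2 hX₂)
end

section
/- (Log-linear property of the error for the IMU system on SE₂(3).) Fix g ∈ ℝ³ (the gravity vector). Let ξ = (ξ^ω, ξ^v, ξ^p) : ℝ → ℝ³ × ℝ³ × ℝ³ be differentiable and solve the linear differential equation (ξ^ω)'(t) = 0, (ξ^v)'(t) = g × ξ^ω(t), (ξ^p)'(t) = ξ^v(t). For x = (x^ω, x^v, x^p) ∈ ℝ⁹, let x^∧ denote the 5×5 matrix [[(x^ω)ₓ, x^v, x^p], [0_{2×3}, 0_{2×2}]]. Define η(t) := exp(ξ(t)^∧) (matrix exponential). Then η(t) exactly solves the nonlinear right-invariant IMU error dynamics: writing R(t) for the top-left 3×3 block of η(t) and v(t) for the top three entries of its 4th column, η is differentiable and η'(t) equals the 5×5 matrix whose top-left 3×3 block is 0, whose 4th-column top entries are g − R(t) g, whose 5th-column top entries are v(t), and whose remaining entries are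 zero. That is, the nonlinear estimation error η can be exactly recovered from the time-varying linear differential equation for ξ. -/
open Matrix NormedSpace

attribute [local instance] Matrix.normedAddCommGroup Matrix.normedSpace

/-- The `5 × 5` matrix with top-left block `R`, 4th-column top entries `v`,
5th-column top entries `p`, and all remaining entries zero; for
`R = (x^ω)ₓ` this is the wedge `x^∧ ∈ se₂(3)` of `x = (x^ω, x^v, x^p)`. -/
def blk5 (R : Matrix (Fin 3) (Fin 3) ℝ) (v p : Fin 3 → ℝ) :
    Matrix (Fin 5) (Fin 5) ℝ :=
  Matrix.of fun i j =>
    if hi : (i : ℕ) < 3 then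
      if hj : (j : ℕ) < 3 then R ⟨i, hi⟩ ⟨j, hj⟩
      else if (j : ℕ) = 3 then v ⟨i, hi⟩
      else p ⟨i, hi⟩
    else 0

/-! ### Algebraic lemmas about `blk5` -/

set_option maxHeartbeats 2000000 in
lemma blk5_mul (A S : Matrix (Fin 3) (Fin 3) ℝ) (b c v p : Fin 3 → ℝ) :
    blk5 A b c * blk5 S v p = blk5 (A * S) (A *ᵥ v) (A *ᵥ p) := by
  ext i j
  fin_cases i <;> fin_cases j <;>
    simp +decide [blk5, Matrix.mul_apply, Matrix.mulVec, dotProduct,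
      Fin.sum_univ_five, Fin.sum_univ_three]

lemma blk5_add (R R' : Matrix (Fin 3) (Fin 3) ℝ) (v v' p p' : Fin 3 → ℝ) :
    blk5 (R + R') (v + v') (p + p') = blk5 R v p + blk5 R' v' p' := by
  ext i j
  simp only [blk5, Matrix.of_apply, Matrix.add_apply, Pi.add_apply]
  split_ifs <;> simp

lemma blk5_smul (a : ℝ) (R : Matrix (Fin 3) (Fin 3) ℝ) (v p : Fin 3 → ℝ) :
    blk5 (a • R) (a • v) (a • p) = a • blk5 R v p := by
  ext i j
  simp only [blk5, Matrix.of_apply, Matrix.smul_apply, Pi.smul_apply, smul_eq_mul]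
  split_ifs <;> simp

lemma blk5_pow (S : Matrix (Fin 3) (Fin 3) ℝ) (v p : Fin 3 → ℝ) (n : ℕ) :
    blk5 S v p ^ (n + 1) = blk5 (S ^ (n + 1)) (S ^ n *ᵥ v) (S ^ n *ᵥ p) := by
  induction n with
  | zero => simp [Matrix.one_mulVec]
  | succ n ih =>
      rw [pow_succ, ih, blk5_mul, ← pow_succ]

/-! ### Summability of the exponential series (entrywise sup norm) -/

section Summability

variable {ι : Type*} [Fintype ι] [DecidableEq ι] [Nonempty ι]

lemma matrix_norm_mul_le (A B : Matrix ι ι ℝ) :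
    ‖A * B‖ ≤ (Fintype.card ι : ℝ) * ‖A‖ * ‖B‖ := by
  rw [Matrix.norm_le_iff (by positivity)]
  intro i j
  rw [Matrix.mul_apply]
  calc ‖∑ k, A i k * B k j‖ ≤ ∑ k, ‖A i k * B k j‖ := norm_sum_le _ _
    _ ≤ ∑ _k : ι, ‖A‖ * ‖B‖ := by
        refine Finset.sum_le_sum fun k _ => ?_
        rw [norm_mul]
        exact mul_le_mul (Matrix.norm_entry_le_entrywise_sup_norm A)
          (Matrix.norm_entry_le_entrywise_sup_norm B) (norm_nonneg _) (norm_nonneg _)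
    _ = (Fintype.card ι : ℝ) * ‖A‖ * ‖B‖ := by
        rw [Finset.sum_const, Finset.card_univ, nsmul_eq_mul, mul_assoc]

lemma matrix_norm_pow_le (M : Matrix ι ι ℝ) (n : ℕ) :
    ‖M ^ n‖ ≤ (max 1 ((Fintype.card ι : ℝ) * ‖M‖)) ^ n := by
  induction n with
  | zero =>
      simp only [pow_zero]
      rw [Matrix.norm_le_iff zero_le_one]
      intro i j
      rcases eq_or_ne i j with h | h <;> simp [Matrix.one_apply, h]
  | succ n ih =>
      have h1 : (0:ℝ) ≤ max 1 ((Fintype.card ι : ℝ) * ‖M‖) := le_trans zero_le_one (le_max_left _ _)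
      calc ‖M ^ (n+1)‖ = ‖M ^ n * M‖ := by rw [pow_succ]
        _ ≤ (Fintype.card ι : ℝ) * ‖M ^ n‖ * ‖M‖ := matrix_norm_mul_le _ _
        _ = ‖M ^ n‖ * ((Fintype.card ι : ℝ) * ‖M‖) := by ring
        _ ≤ (max 1 ((Fintype.card ι : ℝ) * ‖M‖)) ^ n * max 1 ((Fintype.card ι : ℝ) * ‖M‖) := by
            exact mul_le_mul ih (le_max_right _ _) (by positivity) (by positivity)
        _ = (max 1 ((Fintype.card ι : ℝ) * ‖M‖)) ^ (n+1) := by rw [pow_succ]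

lemma summable_expSeries (M : Matrix ι ι ℝ) :
    Summable fun k : ℕ => ((k.factorial : ℝ))⁻¹ • M ^ k := by
  set q : ℝ := max 1 ((Fintype.card ι : ℝ) * ‖M‖) with hq
  refine Summable.of_norm_bounded (g := fun k => q ^ k / k.factorial)
    (Real.summable_pow_div_factorial q) fun k => ?_
  show ‖((k.factorial : ℝ))⁻¹ • M ^ k‖ ≤ q ^ k / (k.factorial : ℝ)
  rw [norm_smul, norm_inv, Real.norm_natCast, div_eq_inv_mul]
  exact mul_le_mul le_rfl (matrix_norm_pow_le M k) (norm_nonneg _) (by positivity)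

lemma summable_expSeries' (M : Matrix ι ι ℝ) :
    Summable fun k : ℕ => (((k+1).factorial : ℝ))⁻¹ • M ^ k := by
  set q : ℝ := max 1 ((Fintype.card ι : ℝ) * ‖M‖) with hq
  refine Summable.of_norm_bounded (g := fun k => q ^ k / k.factorial)
    (Real.summable_pow_div_factorial q) fun k => ?_
  show ‖(((k+1).factorial : ℝ))⁻¹ • M ^ k‖ ≤ q ^ k / (k.factorial : ℝ)
  rw [norm_smul, norm_inv, Real.norm_natCast, div_eq_inv_mul]
  refine mul_le_mul ?_ (matrix_norm_pow_le M k) (norm_nonneg _) (by positivity)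
  exact inv_anti₀ (by positivity) (by exact_mod_cast Nat.factorial_le (Nat.le_succ k))

lemma hasSum_expSeries (M : Matrix ι ι ℝ) :
    HasSum (fun k : ℕ => ((k.factorial : ℝ))⁻¹ • M ^ k) (exp M) := by
  have h := (summable_expSeries M).hasSum
  rwa [show exp M = ∑' k : ℕ, ((k.factorial : ℝ))⁻¹ • M ^ k from by rw [exp_eq_tsum (𝕂 := ℝ)]]

lemma hasSum_expSeries_shift (M : Matrix ι ι ℝ) :
    HasSum (fun k : ℕ => (((k+1).factorial : ℝ))⁻¹ • M ^ (k+1)) (exp M - 1) := by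
  refine (hasSum_nat_add_iff (f := fun k : ℕ => ((k.factorial : ℝ))⁻¹ • M ^ k) 1).mpr ?_
  simpa using hasSum_expSeries M

end Summability

/-! ### The exponential of `blk5` -/

noncomputable def expAux (S : Matrix (Fin 3) (Fin 3) ℝ) : Matrix (Fin 3) (Fin 3) ℝ :=
  ∑' k : ℕ, (((k+1).factorial : ℝ))⁻¹ • S ^ k

lemma hasSum_expAux (S : Matrix (Fin 3) (Fin 3) ℝ) :
    HasSum (fun k : ℕ => (((k+1).factorial : ℝ))⁻¹ • S ^ k) (expAux S) :=
  (summable_expSeries' S).hasSum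

/-- Right multiplication by a fixed matrix, as a continuous linear map. -/
noncomputable def mulRightCLM (S : Matrix (Fin 3) (Fin 3) ℝ) :
    Matrix (Fin 3) (Fin 3) ℝ →L[ℝ] Matrix (Fin 3) (Fin 3) ℝ :=
  LinearMap.toContinuousLinearMap
    { toFun := fun A => A * S
      map_add' := fun A B => add_mul A B S
      map_smul' := fun a A => smul_mul_assoc a A S }

/-- `A ↦ A *ᵥ v` for fixed `v`, as a continuous linear map. -/
noncomputable def mulVecRightCLM (v : Fin 3 → ℝ) :
    Matrix (Fin 3) (Fin 3) ℝ →L[ℝ] (Fin 3 → ℝ) :=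
  LinearMap.toContinuousLinearMap
    { toFun := fun A => A *ᵥ v
      map_add' := fun A B => Matrix.add_mulVec A B v
      map_smul' := fun a A => Matrix.smul_mulVec a A v }

/-- `blk5` as a continuous linear map in the triple `(R, v, p)`. -/
noncomputable def blk5CLM :
    (Matrix (Fin 3) (Fin 3) ℝ × (Fin 3 → ℝ) × (Fin 3 → ℝ)) →L[ℝ] Matrix (Fin 5) (Fin 5) ℝ :=
  LinearMap.toContinuousLinearMap
    { toFun := fun x => blk5 x.1 x.2.1 x.2.2
      map_add' := fun x y => (blk5_add x.1 y.1 x.2.1 y.2.1 x.2.2 y.2.2)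
      map_smul' := fun a x => blk5_smul a x.1 x.2.1 x.2.2 }

lemma expAux_mul (S : Matrix (Fin 3) (Fin 3) ℝ) : expAux S * S = exp S - 1 := by
  have h1 : HasSum (fun k : ℕ => (((k+1).factorial : ℝ))⁻¹ • S ^ (k+1)) (expAux S * S) := by
    have h := (hasSum_expAux S).mapL (mulRightCLM S)
    have e : (fun k : ℕ => mulRightCLM S ((((k+1).factorial : ℝ))⁻¹ • S ^ k))
        = fun k : ℕ => (((k+1).factorial : ℝ))⁻¹ • S ^ (k+1) := by
      funext k
      show ((((k+1).factorial : ℝ))⁻¹ • S ^ k) * S = _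
      rw [smul_mul_assoc, ← pow_succ]
    rw [e] at h
    exact h
  exact h1.unique (hasSum_expSeries_shift S)

lemma exp_blk5 (S : Matrix (Fin 3) (Fin 3) ℝ) (v p : Fin 3 → ℝ) :
    exp (blk5 S v p) = 1 + blk5 (exp S - 1) (expAux S *ᵥ v) (expAux S *ᵥ p) := by
  have hb : HasSum (fun k : ℕ => (((k+1).factorial : ℝ))⁻¹ • (S ^ k *ᵥ v)) (expAux S *ᵥ v) := by
    have h := (hasSum_expAux S).mapL (mulVecRightCLM v)
    have e : (fun k : ℕ => mulVecRightCLM v ((((k+1).factorial : ℝ))⁻¹ • S ^ k))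
        = fun k : ℕ => (((k+1).factorial : ℝ))⁻¹ • (S ^ k *ᵥ v) := by
      funext k
      show ((((k+1).factorial : ℝ))⁻¹ • S ^ k) *ᵥ v = _
      rw [Matrix.smul_mulVec]
    rw [e] at h
    exact h
  have hc : HasSum (fun k : ℕ => (((k+1).factorial : ℝ))⁻¹ • (S ^ k *ᵥ p)) (expAux S *ᵥ p) := by
    have h := (hasSum_expAux S).mapL (mulVecRightCLM p)
    have e : (fun k : ℕ => mulVecRightCLM p ((((k+1).factorial : ℝ))⁻¹ • S ^ k))
        = fun k : ℕ => (((k+1).factorial : ℝ))⁻¹ • (S ^ k *ᵥ p) := by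
      funext k
      show ((((k+1).factorial : ℝ))⁻¹ • S ^ k) *ᵥ p = _
      rw [Matrix.smul_mulVec]
    rw [e] at h
    exact h
  have key : HasSum (fun k : ℕ => (((k+1).factorial : ℝ))⁻¹ • (blk5 S v p) ^ (k+1))
      (blk5 (exp S - 1) (expAux S *ᵥ v) (expAux S *ᵥ p)) := by
    have h := ((hasSum_expSeries_shift S).prodMk (hb.prodMk hc)).mapL blk5CLM
    have e : (fun k : ℕ => blk5CLM ((((k+1).factorial : ℝ))⁻¹ • S ^ (k+1),
          (((k+1).factorial : ℝ))⁻¹ • (S ^ k *ᵥ v), (((k+1).factorial : ℝ))⁻¹ • (S ^ k *ᵥ p)))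
        = fun k : ℕ => (((k+1).factorial : ℝ))⁻¹ • (blk5 S v p) ^ (k+1) := by
      funext k
      show blk5 _ _ _ = _
      rw [blk5_smul, ← blk5_pow]
    rw [e] at h
    exact h
  have hM := hasSum_expSeries (blk5 S v p)
  calc exp (blk5 S v p) = ∑' k : ℕ, ((k.factorial : ℝ))⁻¹ • (blk5 S v p) ^ k := by
        rw [exp_eq_tsum (𝕂 := ℝ)]
    _ = ((Nat.factorial 0 : ℝ))⁻¹ • (blk5 S v p) ^ 0
        + ∑' k : ℕ, (((k+1).factorial : ℝ))⁻¹ • (blk5 S v p) ^ (k+1) :=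
        Summable.tsum_eq_zero_add hM.summable
    _ = 1 + blk5 (exp S - 1) (expAux S *ᵥ v) (expAux S *ᵥ p) := by
        rw [key.tsum_eq]; norm_num

lemma blockR_exp_blk5 (S : Matrix (Fin 3) (Fin 3) ℝ) (v p : Fin 3 → ℝ) :
    blockR (exp (blk5 S v p)) = exp S := by
  rw [exp_blk5]
  ext i j
  fin_cases i <;> fin_cases j <;>
    simp +decide [blockR, blk5, Matrix.one_apply, Matrix.submatrix_apply]

lemma colv_exp_blk5 (S : Matrix (Fin 3) (Fin 3) ℝ) (v p : Fin 3 → ℝ) :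
    colv (exp (blk5 S v p)) = expAux S *ᵥ v := by
  rw [exp_blk5]
  funext i
  fin_cases i <;> simp +decide [colv, blk5, Matrix.one_apply]

lemma cross_eq_neg_skew_mulVec (g ω : Fin 3 → ℝ) :
    crossProduct g ω = -(skew3 ω *ᵥ g) := by
  funext i
  fin_cases i <;>
    simp [crossProduct, skew3, Matrix.mulVec, dotProduct, Fin.sum_univ_three] <;> ring

lemma blk5_decomp (R : Matrix (Fin 3) (Fin 3) ℝ) (v p : Fin 3 → ℝ) :
    blk5 R v p = blk5 R 0 0 + blk5 0 v 0 + blk5 0 0 p := by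
  rw [← blk5_add, ← blk5_add]
  simp

/-- `x ↦ blk5 0 (J *ᵥ x) 0` as a continuous linear map. -/
noncomputable def LvCLM (J : Matrix (Fin 3) (Fin 3) ℝ) :
    (Fin 3 → ℝ) →L[ℝ] Matrix (Fin 5) (Fin 5) ℝ :=
  blk5CLM.comp (LinearMap.toContinuousLinearMap
    { toFun := fun x => (0, J *ᵥ x, 0)
      map_add' := fun x y => by simp [Matrix.mulVec_add, Prod.ext_iff]
      map_smul' := fun a x => by simp [Matrix.mulVec_smul, Prod.ext_iff] })

/-- `x ↦ blk5 0 0 (J *ᵥ x)` as a continuous linear map. -/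
noncomputable def LpCLM (J : Matrix (Fin 3) (Fin 3) ℝ) :
    (Fin 3 → ℝ) →L[ℝ] Matrix (Fin 5) (Fin 5) ℝ :=
  blk5CLM.comp (LinearMap.toContinuousLinearMap
    { toFun := fun x => (0, 0, J *ᵥ x)
      map_add' := fun x y => by simp [Matrix.mulVec_add, Prod.ext_iff]
      map_smul' := fun a x => by simp [Matrix.mulVec_smul, Prod.ext_iff] })

lemma LvCLM_apply (J : Matrix (Fin 3) (Fin 3) ℝ) (x : Fin 3 → ℝ) :
    LvCLM J x = blk5 0 (J *ᵥ x) 0 := rfl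

lemma LpCLM_apply (J : Matrix (Fin 3) (Fin 3) ℝ) (x : Fin 3 → ℝ) :
    LpCLM J x = blk5 0 0 (J *ᵥ x) := rfl

/-- **Log-linear property of the error for the IMU system on SE₂(3).**
If `ξ = (ξ^ω, ξ^v, ξ^p)` solves the linear differential equation
`(ξ^ω)' = 0`, `(ξ^v)' = g × ξ^ω`, `(ξ^p)' = ξ^v`, then
`η t = exp (ξ(t)^∧)` exactly solves the nonlinear right-invariant IMU error
dynamics `η̇ = g_u(η)`, where `g_u(η)` has top-left block `0`, 4th-column top
entries `g − R_η g`, 5th-column top entries `v_η`, and zeros elsewhere. -/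
theorem log_linear_error_IMU (g : Fin 3 → ℝ)
    (ξω ξv ξp : ℝ → Fin 3 → ℝ)
    (hξω : ∀ t : ℝ, HasDerivAt ξω 0 t)
    (hξv : ∀ t : ℝ, HasDerivAt ξv (crossProduct g (ξω t)) t)
    (hξp : ∀ t : ℝ, HasDerivAt ξp (ξv t) t) :
    ∀ t : ℝ, HasDerivAt
      (fun s : ℝ => NormedSpace.exp (blk5 (skew3 (ξω s)) (ξv s) (ξp s)))
      (blk5 0
        (g - blockR (NormedSpace.exp (blk5 (skew3 (ξω t)) (ξv t) (ξp t))) *ᵥ g)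
        (colv (NormedSpace.exp (blk5 (skew3 (ξω t)) (ξv t) (ξp t))))) t := by
  intro t
  have hωconst : ∀ s, ξω s = ξω t := by
    intro s
    refine is_const_of_fderiv_eq_zero (𝕜 := ℝ) (fun x => (hξω x).differentiableAt) (fun x => ?_) s t
    have h := (hξω x).hasFDerivAt
    rw [h.fderiv]
    ext y i
    simp
  set S : Matrix (Fin 3) (Fin 3) ℝ := skew3 (ξω t) with hS
  set J : Matrix (Fin 3) (Fin 3) ℝ := expAux S with hJ
  -- rewrite the function as an affine function of `(ξv s, ξp s)`
  have hfun : (fun s : ℝ => exp (blk5 (skew3 (ξω s)) (ξv s) (ξp s)))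
      = fun s : ℝ => (1 + blk5 (exp S - 1) 0 0) + (LvCLM J (ξv s) + LpCLM J (ξp s)) := by
    funext s
    rw [hωconst s, exp_blk5, LvCLM_apply, LpCLM_apply, ← hS, ← hJ, add_assoc]
    congr 1
    rw [blk5_decomp, add_assoc]
  -- identify the claimed derivative
  have hderiv_eq : (blk5 0
        (g - blockR (exp (blk5 (skew3 (ξω t)) (ξv t) (ξp t))) *ᵥ g)
        (colv (exp (blk5 (skew3 (ξω t)) (ξv t) (ξp t)))))
      = LvCLM J (crossProduct g (ξω t)) + LpCLM J (ξv t) := by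
    rw [LvCLM_apply, LpCLM_apply, blockR_exp_blk5, colv_exp_blk5, ← hS, ← hJ]
    have h1 : J *ᵥ crossProduct g (ξω t) = g - exp S *ᵥ g := by
      rw [cross_eq_neg_skew_mulVec, ← hS, Matrix.mulVec_neg, Matrix.mulVec_mulVec,
        hJ, expAux_mul, Matrix.sub_mulVec, Matrix.one_mulVec, neg_sub]
    rw [h1, show blk5 0 (g - exp S *ᵥ g) (J *ᵥ ξv t)
        = blk5 0 (g - exp S *ᵥ g) 0 + blk5 0 0 (J *ᵥ ξv t) from by rw [← blk5_add]; simp]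
  rw [hfun, hderiv_eq]
  refine (HasDerivAt.add ?_ ?_).const_add _
  · exact ((LvCLM J).hasFDerivAt.comp_hasDerivAt t (hξv t))
  · exact ((LpCLM J).hasFDerivAt.comp_hasDerivAt t (hξp t))
end

section
/- (Group-affinity of the contact-aided inertial process model on SE₃(3).) Fix ω̃, ã, g ∈ ℝ³. Define f : Matrix 6 6 ℝ → Matrix 6 6 ℝ as follows: for a 6×6 matrix X, writing R for its top-left 3×3 block, v ∈ ℝ³ for the top three entries of its 4th column, p ∈ ℝ³ for the top three entries of its 5th column, and d ∈ ℝ³ for the top three entries of its 6th column, let f(X) be the 6×6 matrix whose top-left 3×3 block is R(ω̃)ₓ, whose 4th column has top three entries R ã + g, whose 5th column has top three entries v, whose 6th column has top three entries 0 (the contact position is constant), and whose remaining entries (in particular the bottom three rows) are zero. Then for all 6×6 matrices X₁, X₂ whose bottom three rows equal [0_{3×3} I₃], one has f(X₁ X₂) = f(X₁) X₂ + X₁ f(X₂) − X₁ f(I₆) X₂, where I₆ is the 6×6 identity matrix; i.e., the contact-aided inertial process model is group affine. -/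
open Matrix

/-- The top-left `3 × 3` block `R` of a `6 × 6` matrix. -/
def blockR6 (X : Matrix (Fin 6) (Fin 6) ℝ) : Matrix (Fin 3) (Fin 3) ℝ :=
  X.submatrix (Fin.castLE (by norm_num)) (Fin.castLE (by norm_num))

/-- The top three entries `v` of the 4th column of a `6 × 6` matrix. -/
def colv6 (X : Matrix (Fin 6) (Fin 6) ℝ) : Fin 3 → ℝ :=
  fun i => X (Fin.castLE (by norm_num) i) 3

/-- The contact-aided inertial process model `f` on `6 × 6` matrices: for `X`
with blocks `R, v, p, d`, `f X` has top-left block `R (ω̃)ₓ`, 4th-column top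
entries `R ã + g`, 5th-column top entries `v`, 6th-column top entries `0`
(the contact position is constant), and zeros elsewhere. -/
def fContact (ω a g : Fin 3 → ℝ) (X : Matrix (Fin 6) (Fin 6) ℝ) :
    Matrix (Fin 6) (Fin 6) ℝ :=
  Matrix.of fun i j =>
    if hi : (i : ℕ) < 3 then
      if hj : (j : ℕ) < 3 then (blockR6 X * skew3 ω) ⟨i, hi⟩ ⟨j, hj⟩
      else if (j : ℕ) = 3 then (blockR6 X *ᵥ a + g) ⟨i, hi⟩
      else if (j : ℕ) = 4 then colv6 X ⟨i, hi⟩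
      else 0
    else 0

/-! On the group, `f X = X W + G X` for two fixed matrices: `W` carries `(ω̃)ₓ` and `ã`, `G`
carries `g`, and the coupling `v ↦ p` is written as `X N - N X` with `N = E₃₄`, since `N X = N` on
the group. Every map `X ↦ X W + G X` is group affine: the cross terms `X₁ W X₂ + X₁ G X₂` of
`f X₁ · X₂ + X₁ · f X₂` are exactly `X₁ f(I) X₂`. -/

def IsGroupAffineOn {M : Type*} [Ring M] (S : Submonoid M) (f : M → M) : Prop :=
  ∀ X ∈ S, ∀ Y ∈ S, f (X * Y) = f X * Y + X * f Y - X * f 1 * Y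

theorem IsGroupAffineOn.of_eq_mul_add_mul {M : Type*} [Ring M] {S : Submonoid M} {f : M → M}
    (W G : M) (hf : ∀ X ∈ S, f X = X * W + G * X) : IsGroupAffineOn S f := by
  intro X hX Y hY
  rw [hf _ (S.mul_mem hX hY), hf X hX, hf Y hY, hf 1 S.one_mem]
  noncomm_ring

namespace Matrix

def bottomRowsOneSubmonoid (R : Type*) [Semiring R] (n k : ℕ) :
    Submonoid (Matrix (Fin n) (Fin n) R) where
  carrier := {X | ∀ i : Fin n, k ≤ (i : ℕ) → X i = (1 : Matrix (Fin n) (Fin n) R) i}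
  one_mem' _ _ := rfl
  mul_mem' {X Y} hX hY i hi := by
    rw [← hY i hi]
    ext j
    rw [mul_apply, hX i hi]
    simp [one_apply]

end Matrix

def fContactRight (ω a : Fin 3 → ℝ) : Matrix (Fin 6) (Fin 6) ℝ :=
  !![0, -ω 2, ω 1, a 0, 0, 0;
     ω 2, 0, -ω 0, a 1, 0, 0;
     -ω 1, ω 0, 0, a 2, 0, 0;
     0, 0, 0, 0, 1, 0;
     0, 0, 0, 0, 0, 0;
     0, 0, 0, 0, 0, 0]

def fContactLeft (g : Fin 3 → ℝ) : Matrix (Fin 6) (Fin 6) ℝ :=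
  !![0, 0, 0, g 0, 0, 0;
     0, 0, 0, g 1, 0, 0;
     0, 0, 0, g 2, 0, 0;
     0, 0, 0, 0, -1, 0;
     0, 0, 0, 0, 0, 0;
     0, 0, 0, 0, 0, 0]

theorem fContact_eq_mul_add_mul (ω a g : Fin 3 → ℝ) {X : Matrix (Fin 6) (Fin 6) ℝ}
    (hX : X ∈ bottomRowsOneSubmonoid ℝ 6 3) :
    fContact ω a g X = X * fContactRight ω a + fContactLeft g * X := by
  have h3 := hX 3 le_rfl
  have h4 := hX 4 (by norm_num)
  have h5 := hX 5 (by norm_num)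
  ext i j
  fin_cases i <;> fin_cases j <;>
    simp [fContact, blockR6, colv6, skew3, fContactRight, fContactLeft, mul_apply,
      Fin.sum_univ_succ, mulVec, vecMul, dotProduct, h3, h4, h5, one_apply]

theorem isGroupAffineOn_fContact (ω a g : Fin 3 → ℝ) :
    IsGroupAffineOn (bottomRowsOneSubmonoid ℝ 6 3) (fContact ω a g) :=
  .of_eq_mul_add_mul _ _ fun _ hX => fContact_eq_mul_add_mul ω a g hX

/-- **Group-affinity of the contact-aided inertial process model on SE₃(3).**
For all `6 × 6` matrices `X₁, X₂` whose bottom three rows equal `[0 I₃]`,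
`f (X₁ X₂) = f X₁ · X₂ + X₁ · f X₂ − X₁ · f I₆ · X₂`. -/
theorem fContact_group_affine (ω a g : Fin 3 → ℝ)
    (X₁ X₂ : Matrix (Fin 6) (Fin 6) ℝ)
    (hX₁ : ∀ i : Fin 6, 3 ≤ (i : ℕ) → ∀ j : Fin 6,
      X₁ i j = if (i : ℕ) = (j : ℕ) then 1 else 0)
    (hX₂ : ∀ i : Fin 6, 3 ≤ (i : ℕ) → ∀ j : Fin 6,
      X₂ i j = if (i : ℕ) = (j : ℕ) then 1 else 0) :
    fContact ω a g (X₁ * X₂) =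
      fContact ω a g X₁ * X₂ + X₁ * fContact ω a g X₂ -
        X₁ * fContact ω a g 1 * X₂ := by
  have mem : ∀ X : Matrix (Fin 6) (Fin 6) ℝ, (∀ i : Fin 6, 3 ≤ (i : ℕ) → ∀ j : Fin 6,
      X i j = if (i : ℕ) = (j : ℕ) then 1 else 0) → X ∈ bottomRowsOneSubmonoid ℝ 6 3 :=
    fun X hX i hi => funext fun j => by simp [hX i hi j, one_apply, Fin.ext_iff]
  exact isGroupAffineOn_fContact ω a g X₁ (mem X₁ hX₁) X₂ (mem X₂ hX₂)
end
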